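/- arXiv:1401.7704 — 3 statements merged into one kernel-verified Lean document; each statement's English description precedes it below -/
import Mathlib

section
/- Let R > 0 and let σ_n : ℝ → ℝ (n = 0, 1, 2, …) be differentiable functions satisfying the recursion σ_0'(x) = −2σ_1(x) and, for n ≥ 1, σ_n'(x) = −2σ_{n+1}(x) + Σ_{j=0}^{n−1} σ_j(x)σ_{n−1−j}(x), together with the bounds |σ_n(x)| ≤ R^{n+2} for all n ≥ 0 and x ∈ ℝ. Then each σ_n is infinitely differentiable, and for all integers n, p ≥ 0 and all x ∈ ℝ, |σ_n^{(p)}(x)| ≤ R^{n+p+2} · (n+1+p)!/(n+1)!. -/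
/-! Write `m^{(p)} = m (m + 1) ⋯ (m + p - 1)` for the rising factorial, so that
`(n + 1 + p)! / (n + 1)! = (n + 2)^{(p)}`, and prove `|σ_n^{(p)}| ≤ R ^ (n + 2 + p) (n + 2)^{(p)}` by
strong induction on `p`, for all `n` at once. Differentiating the recursion `p` times, the Leibniz
rule and the Vandermonde identity `(a + b)^{(p)} = ∑ C(p, i) a^{(i)} b^{(p - i)}` bound each of the
`n` products `σ_j σ_{n-1-j}` by `R ^ (n + 3 + p) (n + 3)^{(p)}`, and `-2 σ_{n+1}^{(p)}` by twice
that; since `(n + 2) (n + 3)^{(p)} = (n + 2)^{(p+1)}`, the induction closes. -/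

open Finset

theorem Nat.add_ascFactorial_eq_sum_choose_mul (a b : ℕ) : ∀ p : ℕ,
    (a + b).ascFactorial p =
      ∑ i ∈ range (p + 1), p.choose i * (a.ascFactorial i * b.ascFactorial (p - i))
  | 0 => by simp
  | p + 1 => by
    have hpascal := sum_choose_succ_nsmul (fun i k => a.ascFactorial i * b.ascFactorial k) p
    simp only [smul_eq_mul] at hpascal
    rw [hpascal, ← sum_add_distrib, Nat.ascFactorial_succ, add_ascFactorial_eq_sum_choose_mul a b p,
      mul_sum]
    refine sum_congr rfl fun i hi => ?_
    have hip : i ≤ p := Nat.lt_succ_iff.mp (mem_range.mp hi)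
    rw [Nat.sub_add_comm hip, Nat.ascFactorial_succ, Nat.ascFactorial_succ,
      show a + b + p = (b + (p - i)) + (a + i) by omega]
    ring

theorem abs_iteratedDeriv_mul_le_of_ascFactorial {f g : ℝ → ℝ} {R x : ℝ} {a b p : ℕ}
    (hR : 0 ≤ R) (hf : ContDiff ℝ p f) (hg : ContDiff ℝ p g)
    (hfx : ∀ i ≤ p, |iteratedDeriv i f x| ≤ R ^ (a + i) * a.ascFactorial i)
    (hgx : ∀ i ≤ p, |iteratedDeriv i g x| ≤ R ^ (b + i) * b.ascFactorial i) :
    |iteratedDeriv p (fun y => f y * g y) x| ≤ R ^ (a + b + p) * (a + b).ascFactorial p := by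
  rw [iteratedDeriv_fun_mul hf.contDiffAt hg.contDiffAt, Nat.add_ascFactorial_eq_sum_choose_mul]
  push_cast
  rw [mul_sum]
  refine (abs_sum_le_sum_abs _ _).trans (sum_le_sum fun i hi => ?_)
  have hip : i ≤ p := Nat.lt_succ_iff.mp (mem_range.mp hi)
  rw [abs_mul, abs_mul, Nat.abs_cast, show a + b + p = (a + i) + (b + (p - i)) by omega, pow_add]
  calc (p.choose i : ℝ) * |iteratedDeriv i f x| * |iteratedDeriv (p - i) g x|
      ≤ p.choose i * (R ^ (a + i) * a.ascFactorial i) *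
          (R ^ (b + (p - i)) * b.ascFactorial (p - i)) := by
        gcongr
        exacts [hfx i hip, hgx (p - i) (Nat.sub_le p i)]
    _ = _ := by ring

def RiccatiMomentRecursion (σ : ℕ → ℝ → ℝ) : Prop :=
  ∀ n, deriv (σ n) = fun x => -2 * σ (n + 1) x + ∑ j ∈ range n, σ j x * σ (n - 1 - j) x

namespace RiccatiMomentRecursion

variable {σ : ℕ → ℝ → ℝ}

theorem contDiff (hderiv : RiccatiMomentRecursion σ) (hdiff : ∀ n, Differentiable ℝ (σ n)) (n : ℕ) :
    ContDiff ℝ (⊤ : ℕ∞) (σ n) := by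
  suffices h : ∀ k : ℕ, ∀ n, ContDiff ℝ k (σ n) from contDiff_infty.mpr fun k => h k n
  intro k
  induction k with
  | zero => exact fun n => contDiff_zero.mpr (hdiff n).continuous
  | succ k ih =>
    intro n
    rw [Nat.cast_succ]
    refine contDiff_succ_iff_deriv.mpr ⟨hdiff n, by simp, ?_⟩
    rw [hderiv n]
    exact (contDiff_const.mul (ih (n + 1))).add (ContDiff.sum fun j _ => (ih j).mul (ih _))

theorem iteratedDeriv_succ_eq (hderiv : RiccatiMomentRecursion σ)
    (hsmooth : ∀ n, ContDiff ℝ (⊤ : ℕ∞) (σ n))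
    (p n : ℕ) (x : ℝ) :
    iteratedDeriv (p + 1) (σ n) x = -2 * iteratedDeriv p (σ (n + 1)) x +
      ∑ j ∈ range n, iteratedDeriv p (fun y => σ j y * σ (n - 1 - j) y) x := by
  have hsm : ∀ m, ContDiff ℝ p (σ m) := fun m => (hsmooth m).of_le (by exact_mod_cast le_top)
  rw [iteratedDeriv_succ', hderiv n, iteratedDeriv_fun_add, iteratedDeriv_const_mul,
    iteratedDeriv_fun_sum]
  · exact fun j _ => ((hsm j).mul (hsm _)).contDiffAt
  · exact (hsm _).contDiffAt
  · exact (contDiff_const.mul (hsm _)).contDiffAt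
  · exact (ContDiff.sum fun j _ => (hsm j).mul (hsm _)).contDiffAt

theorem abs_iteratedDeriv_le (hderiv : RiccatiMomentRecursion σ)
    (hsmooth : ∀ n, ContDiff ℝ (⊤ : ℕ∞) (σ n))
    {R : ℝ} (hR : 0 ≤ R) (hbound : ∀ n x, |σ n x| ≤ R ^ (n + 2)) (p : ℕ) :
    ∀ n x, |iteratedDeriv p (σ n) x| ≤ R ^ (n + 2 + p) * (n + 2).ascFactorial p := by
  induction p using Nat.strong_induction_on with
  | _ p ih =>
    intro n x
    rcases p with _ | p
    · simpa using hbound n x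
    have hsm : ∀ m, ContDiff ℝ p (σ m) := fun m => (hsmooth m).of_le (by exact_mod_cast le_top)
    set M := R ^ (n + 3 + p) * ((n + 3).ascFactorial p : ℝ)
    have hshift : |iteratedDeriv p (σ (n + 1)) x| ≤ M := ih p p.lt_succ_self (n + 1) x
    have hproduct : ∀ j ∈ range n, |iteratedDeriv p (fun y => σ j y * σ (n - 1 - j) y) x| ≤ M := by
      intro j hj
      have hindex : j + 2 + (n - 1 - j + 2) = n + 3 := by have := mem_range.mp hj; omega
      have := abs_iteratedDeriv_mul_le_of_ascFactorial hR (hsm j) (hsm (n - 1 - j))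
        (fun i hi => ih i (Nat.lt_succ_of_le hi) j x) (fun i hi => ih i (Nat.lt_succ_of_le hi) _ x)
      rwa [hindex] at this
    have hsum := (abs_sum_le_sum_abs _ _).trans (sum_le_sum hproduct)
    rw [sum_const, card_range, nsmul_eq_mul] at hsum
    calc |iteratedDeriv (p + 1) (σ n) x|
        ≤ 2 * |iteratedDeriv p (σ (n + 1)) x| +
            |∑ j ∈ range n, iteratedDeriv p (fun y => σ j y * σ (n - 1 - j) y) x| := by
          rw [hderiv.iteratedDeriv_succ_eq hsmooth]
          refine (abs_add_le _ _).trans ?_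
          rw [abs_mul]
          norm_num
      _ ≤ 2 * M + n * M := by gcongr
      _ = R ^ (n + 2 + (p + 1)) * (n + 2).ascFactorial (p + 1) := by
          rw [Nat.ascFactorial_succ, ← Nat.succ_ascFactorial,
            show n + 2 + (p + 1) = n + 3 + p by omega]
          push_cast
          ring

end RiccatiMomentRecursion

/-- Lemma 4.2: let `R > 0` and let `σ_n : ℝ → ℝ` (`n ≥ 0`) be differentiable functions with
`σ₀' = -2σ₁`, `σ_n' = -2σ_{n+1} + Σ_{j=0}^{n-1} σ_j σ_{n-1-j}` for `n ≥ 1`, and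
`|σ_n(x)| ≤ R^{n+2}`. Then each `σ_n` is infinitely differentiable and
`|σ_n^{(p)}(x)| ≤ R^{n+p+2} (n+1+p)!/(n+1)!` for all `n, p ≥ 0` and `x ∈ ℝ`. -/
theorem statement11 (R : ℝ) (hR : 0 < R) (σ : ℕ → ℝ → ℝ)
    (hdiff : ∀ n : ℕ, Differentiable ℝ (σ n))
    (hrec0 : ∀ x : ℝ, deriv (σ 0) x = -2 * σ 1 x)
    (hrec : ∀ n : ℕ, 1 ≤ n → ∀ x : ℝ, deriv (σ n) x =
      -2 * σ (n+1) x + ∑ j ∈ Finset.range n, σ j x * σ (n - 1 - j) x)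
    (hbound : ∀ (n : ℕ) (x : ℝ), |σ n x| ≤ R ^ (n + 2)) :
    ∀ n : ℕ, ContDiff ℝ (⊤ : ℕ∞) (σ n) ∧
      ∀ (p : ℕ) (x : ℝ), |iteratedDeriv p (σ n) x| ≤
        R ^ (n + p + 2) * (Nat.factorial (n + 1 + p)) / (Nat.factorial (n + 1)) := by
  have hderiv : RiccatiMomentRecursion σ := by
    rintro (_ | n) <;> funext x
    · simpa using hrec0 x
    · exact hrec (n + 1) n.succ_pos x
  have hsmooth := hderiv.contDiff hdiff
  refine fun n => ⟨hsmooth n, fun p x => ?_⟩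
  rw [← Nat.factorial_mul_ascFactorial, Nat.cast_mul, mul_div_assoc,
    mul_div_cancel_left₀ _ (by positivity), add_right_comm]
  exact hderiv.abs_iteratedDeriv_le hsmooth hR.le hbound p n x
end

section
/- For every infinitely differentiable, compactly supported g : ℝ → ℝ, the integral ∫_0^∞ x^{−1/2} ( ∫_ℝ g(t)·sin(t√x)/√x dt ) dx converges absolutely and equals π ∫_ℝ sgn(t) g(t) dt. -/
/-!
Substituting `x = u²` turns the integral into `2 ∫₀^∞ F(u) / u du`, where
`F(u) = ∫ g(t) sin(tu) dt` is the sine transform of `g`. Since `|F(u)| ≤ |u| ∫ |t g(t)| dt`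
and, after one integration by parts, `|F(u)| ≤ ∫ |g'| / |u|`, the integrand is
`O((1 + u²)⁻¹)`. By Fubini, `∫₀^R F(u) / u du = ∫ g(t) Si(tR) dt`, and the sine integral
`Si` is bounded and tends to `± π / 2` at `± ∞` (Dirichlet's integral, obtained from
`sin u / u = ∫₀^∞ e^{-su} sin u ds` and Fubini again), so dominated convergence gives the
limit `π / 2 ∫ sgn(t) g(t) dt` as `R → ∞`.
-/

open MeasureTheory Filter Set

noncomputable section

open Real Topology

def sineIntegral (y : ℝ) : ℝ := ∫ v in (0 : ℝ)..y, sinc v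

def sineTransform (g : ℝ → ℝ) (u : ℝ) : ℝ := ∫ t, g t * sin (t * u)

lemma continuous_sineIntegral : Continuous sineIntegral :=
  intervalIntegral.continuous_primitive (fun _ _ => continuous_sinc.intervalIntegrable _ _) 0

lemma sineIntegral_neg (y : ℝ) : sineIntegral (-y) = -sineIntegral y := by
  have h := intervalIntegral.integral_comp_neg (a := 0) (b := y) sinc
  simp only [sinc_neg, neg_zero] at h
  rw [sineIntegral, sineIntegral, h, intervalIntegral.integral_symm]

lemma hasDerivAt_exp_mul_cos_add_mul_sin (s w : ℝ) :
    HasDerivAt (fun w => -(exp (-w * s) * (cos w + s * sin w)) / (1 + s ^ 2))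
      (exp (-w * s) * sin w) w := by
  have hexp : HasDerivAt (fun w => exp (-w * s)) (exp (-w * s) * (-s)) w :=
    ((hasDerivAt_neg w).mul_const s).exp.congr_deriv (by ring)
  have htrig : HasDerivAt (fun w => cos w + s * sin w) (-sin w + s * cos w) w :=
    (hasDerivAt_cos w).add ((hasDerivAt_sin w).const_mul s)
  refine ((hexp.mul htrig).neg.div_const (1 + s ^ 2)).congr_deriv ?_
  field_simp
  ring

lemma integral_exp_mul_sin (s R : ℝ) :
    ∫ u in (0 : ℝ)..R, exp (-u * s) * sin u
      = (1 - exp (-R * s) * (cos R + s * sin R)) / (1 + s ^ 2) := by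
  rw [intervalIntegral.integral_eq_sub_of_hasDerivAt
    (fun w _ => hasDerivAt_exp_mul_cos_add_mul_sin s w)
    ((by fun_prop : Continuous fun u => exp (-u * s) * sin u).intervalIntegrable _ _)]
  simp only [neg_mul, neg_zero, zero_mul, exp_zero, cos_zero, sin_zero, mul_zero, add_zero, mul_one]
  ring

lemma integral_exp_neg_mul_Ioi {u : ℝ} (hu : 0 < u) :
    ∫ s in Ioi (0 : ℝ), exp (-u * s) = u⁻¹ := by
  rw [integral_exp_mul_Ioi (neg_neg_of_pos hu), mul_zero, exp_zero]
  field_simp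

lemma abs_exp_mul_cos_add_mul_sin_div_le {s : ℝ} (hs : 0 ≤ s) (R : ℝ) :
    |exp (-R * s) * (cos R + s * sin R) / (1 + s ^ 2)| ≤ 2 * exp (-R * s) := by
  have htrig : |cos R + s * sin R| ≤ 1 + s := by
    calc |cos R + s * sin R| ≤ |cos R| + s * |sin R| := by
          simpa [abs_mul, abs_of_nonneg hs] using abs_add_le (cos R) (s * sin R)
      _ ≤ 1 + s * 1 := by gcongr <;> [exact abs_cos_le_one R; exact abs_sin_le_one R]
      _ = 1 + s := by ring
  rw [abs_div, abs_mul, abs_of_pos (exp_pos _), abs_of_pos (by positivity : (0 : ℝ) < 1 + s ^ 2),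
    div_le_iff₀ (by positivity)]
  have := exp_pos (-R * s)
  nlinarith [sq_nonneg (s - 1)]

lemma integrableOn_exp_mul_cos_add_mul_sin_div {R : ℝ} (hR : 0 < R) :
    IntegrableOn (fun s => exp (-R * s) * (cos R + s * sin R) / (1 + s ^ 2)) (Ioi 0) := by
  refine Integrable.mono' ((exp_neg_integrableOn_Ioi 0 hR).const_mul 2)
    ((Continuous.div (by fun_prop) (by fun_prop) fun s => by positivity).aestronglyMeasurable) ?_
  filter_upwards [ae_restrict_mem measurableSet_Ioi] with s hs
  exact abs_exp_mul_cos_add_mul_sin_div_le (le_of_lt hs) R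

lemma abs_integral_exp_mul_cos_add_mul_sin_div_le {R : ℝ} (hR : 0 < R) :
    |∫ s in Ioi (0 : ℝ), exp (-R * s) * (cos R + s * sin R) / (1 + s ^ 2)| ≤ 2 / R := by
  calc _ ≤ ∫ s in Ioi (0 : ℝ), 2 * exp (-R * s) := by
        rw [← norm_eq_abs]
        refine norm_integral_le_of_norm_le ((exp_neg_integrableOn_Ioi 0 hR).const_mul 2) ?_
        filter_upwards [ae_restrict_mem measurableSet_Ioi] with s hs
        exact abs_exp_mul_cos_add_mul_sin_div_le (le_of_lt hs) R
    _ = 2 / R := by rw [integral_const_mul, integral_exp_neg_mul_Ioi hR, div_eq_mul_inv]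

lemma sinc_eq_integral_exp_mul_sin {u : ℝ} (hu : 0 < u) :
    sinc u = ∫ s in Ioi (0 : ℝ), exp (-u * s) * sin u := by
  rw [integral_mul_const, integral_exp_neg_mul_Ioi hu, sinc_of_ne_zero hu.ne', inv_mul_eq_div]

lemma sineIntegral_eq_pi_div_two_sub {R : ℝ} (hR : 0 < R) :
    sineIntegral R
      = π / 2 - ∫ s in Ioi (0 : ℝ), exp (-R * s) * (cos R + s * sin R) / (1 + s ^ 2) := by
  have hint : Integrable (Function.uncurry fun u s => exp (-u * s) * sin u)
      ((volume.restrict (Ioc 0 R)).prod (volume.restrict (Ioi 0))) := by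
    refine (integrable_prod_iff (by fun_prop)).2 ⟨?_, ?_⟩
    · filter_upwards [ae_restrict_mem measurableSet_Ioc] with u hu
      exact (exp_neg_integrableOn_Ioi 0 hu.1).mul_const (sin u)
    · refine (continuous_sinc.abs.integrableOn_Icc (a := 0) (b := R)).mono_set
        Ioc_subset_Icc_self |>.congr_fun (fun u hu => ?_) measurableSet_Ioc
      simp only [Function.uncurry_apply_pair, norm_mul, norm_eq_abs, abs_of_pos (exp_pos _)]
      rw [integral_mul_const, integral_exp_neg_mul_Ioi hu.1, sinc_of_ne_zero hu.1.ne', abs_div,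
        abs_of_pos hu.1, inv_mul_eq_div]
  calc sineIntegral R = ∫ u in Ioc 0 R, ∫ s in Ioi (0 : ℝ), exp (-u * s) * sin u := by
        rw [sineIntegral, intervalIntegral.integral_of_le hR.le]
        exact setIntegral_congr_fun measurableSet_Ioc fun u hu =>
          sinc_eq_integral_exp_mul_sin hu.1
    _ = ∫ s in Ioi (0 : ℝ), (1 - exp (-R * s) * (cos R + s * sin R)) / (1 + s ^ 2) := by
        rw [integral_integral_swap hint]
        refine setIntegral_congr_fun measurableSet_Ioi fun s _ => ?_
        rw [← intervalIntegral.integral_of_le hR.le, integral_exp_mul_sin]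
    _ = _ := by
        simp_rw [sub_div, one_div]
        rw [integral_sub integrable_inv_one_add_sq.integrableOn
          (integrableOn_exp_mul_cos_add_mul_sin_div hR), integral_Ioi_inv_one_add_sq]
        simp

lemma abs_sineIntegral_sub_pi_div_two_le {R : ℝ} (hR : 0 < R) :
    |sineIntegral R - π / 2| ≤ 2 / R := by
  rw [sineIntegral_eq_pi_div_two_sub hR, sub_sub_cancel_left, abs_neg]
  exact abs_integral_exp_mul_cos_add_mul_sin_div_le hR

lemma tendsto_sineIntegral_atTop : Tendsto sineIntegral atTop (𝓝 (π / 2)) := by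
  refine tendsto_iff_norm_sub_tendsto_zero.2 <|
    squeeze_zero_norm' ?_ ((tendsto_const_nhds (x := (2 : ℝ))).div_atTop tendsto_id)
  filter_upwards [eventually_gt_atTop 0] with R hR
  simpa using abs_sineIntegral_sub_pi_div_two_le hR

lemma tendsto_sineIntegral_atBot : Tendsto sineIntegral atBot (𝓝 (-(π / 2))) := by
  simpa [Function.comp_def, sineIntegral_neg] using
    (tendsto_sineIntegral_atTop.comp tendsto_neg_atBot_atTop).neg

lemma tendsto_sineIntegral_mul_atTop (t : ℝ) :
    Tendsto (fun R => sineIntegral (t * R)) atTop (𝓝 (π / 2 * sign t)) := by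
  rcases lt_trichotomy t 0 with ht | rfl | ht
  · simpa [sign_of_neg ht, Function.comp_def] using
      tendsto_sineIntegral_atBot.comp (tendsto_id.const_mul_atTop_of_neg ht : Tendsto (t * ·) _ _)
  · simp [sineIntegral]
  · simpa [sign_of_pos ht, Function.comp_def] using
      tendsto_sineIntegral_atTop.comp (tendsto_id.const_mul_atTop ht : Tendsto (t * ·) _ _)

lemma abs_sineIntegral_le (y : ℝ) : |sineIntegral y| ≤ π / 2 + 2 := by
  wlog hy : 0 ≤ y generalizing y
  · simpa [sineIntegral_neg] using this (-y) (by linarith)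
  rcases le_or_gt y 1 with hy1 | hy1
  · have : ‖∫ v in (0 : ℝ)..y, sinc v‖ ≤ 1 * |y - 0| :=
      intervalIntegral.norm_integral_le_of_norm_le_const fun v _ => abs_sinc_le_one v
    rw [sub_zero, abs_of_nonneg hy, norm_eq_abs, ← sineIntegral] at this
    linarith [pi_pos]
  · have h := abs_sineIntegral_sub_pi_div_two_le (zero_lt_one.trans hy1)
    have : 2 / y ≤ 2 := div_le_self zero_le_two hy1.le
    have := abs_sub_abs_le_abs_sub (sineIntegral y) (π / 2)
    rw [abs_of_pos (by positivity : (0:ℝ) < π / 2)] at this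
    linarith

variable {g : ℝ → ℝ}

lemma sin_mul_div_eq_mul_sinc (t : ℝ) {u : ℝ} (hu : u ≠ 0) :
    sin (t * u) / u = t * sinc (t * u) := by
  rcases eq_or_ne t 0 with rfl | ht
  · simp
  · rw [sinc_of_ne_zero (mul_ne_zero ht hu)]
    field_simp

lemma abs_sineTransform_le_mul (hg : Integrable fun t => t * g t) (u : ℝ) :
    |sineTransform g u| ≤ |u| * ∫ t, |t * g t| := by
  rw [← integral_const_mul]
  refine abs_integral_le_integral_abs.trans (integral_mono_of_nonneg
    (ae_of_all _ fun _ => abs_nonneg _) (hg.abs.const_mul _) (ae_of_all _ fun t => ?_))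
  calc |g t * sin (t * u)| ≤ |g t| * |t * u| := by
        rw [abs_mul]
        exact mul_le_mul_of_nonneg_left abs_sin_le_abs (abs_nonneg _)
    _ = |u| * |t * g t| := by simp only [abs_mul]; ring

lemma sineTransform_eq_integral_deriv_mul_cos_div (hg : ContDiff ℝ 1 g)
    (hsupp : HasCompactSupport g) {u : ℝ} (hu : u ≠ 0) :
    sineTransform g u = (∫ t, deriv g t * cos (t * u)) / u := by
  have hcos : ∀ t, HasDerivAt (fun t => -cos (t * u) / u) (sin (t * u)) t := fun t => by
    refine (((hasDerivAt_mul_const u).cos).neg.div_const u).congr_deriv ?_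
    field_simp
  have hgd : Continuous (deriv g) := hg.continuous_deriv le_rfl
  rw [sineTransform, integral_mul_deriv_eq_deriv_mul_of_integrable
    (fun t _ => (hg.differentiable one_ne_zero t).hasDerivAt) (fun t _ => hcos t)
    ((hg.continuous.mul (by fun_prop)).integrable_of_hasCompactSupport hsupp.mul_right)
    ((hgd.mul (by fun_prop)).integrable_of_hasCompactSupport hsupp.deriv.mul_right)
    ((hg.continuous.mul (by fun_prop)).integrable_of_hasCompactSupport hsupp.mul_right),
    ← integral_neg, ← integral_div]
  congr 1 with t
  ring

lemma abs_sineTransform_le_div (hg : ContDiff ℝ 1 g) (hsupp : HasCompactSupport g)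
    {u : ℝ} (hu : u ≠ 0) : |sineTransform g u| ≤ (∫ t, |deriv g t|) / |u| := by
  rw [sineTransform_eq_integral_deriv_mul_cos_div hg hsupp hu, abs_div]
  gcongr
  refine abs_integral_le_integral_abs.trans (integral_mono_of_nonneg
    (ae_of_all _ fun _ => abs_nonneg _) ?_ (ae_of_all _ fun t => ?_))
  · exact (hg.continuous_deriv le_rfl).abs.integrable_of_hasCompactSupport hsupp.deriv.abs
  · simpa [abs_mul] using
      mul_le_mul_of_nonneg_left (abs_cos_le_one (t * u)) (abs_nonneg (deriv g t))

lemma continuous_sineTransform (hg : Integrable g) : Continuous (sineTransform g) :=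
  continuous_of_dominated (fun u => hg.aestronglyMeasurable.mul (by fun_prop))
    (fun u => ae_of_all _ fun t => by
      simpa [abs_mul] using mul_le_mul_of_nonneg_left (abs_sin_le_one (t * u)) (abs_nonneg (g t)))
    hg.abs (ae_of_all _ fun t => by fun_prop)

lemma integrable_sineTransform_div (hg : ContDiff ℝ 1 g) (hsupp : HasCompactSupport g) :
    Integrable fun u => sineTransform g u / u := by
  set A := ∫ t, |t * g t|
  set B := ∫ t, |deriv g t|
  have htg : Integrable fun t => t * g t :=
    (continuous_id.mul hg.continuous).integrable_of_hasCompactSupport hsupp.mul_left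
  have hF : Continuous (sineTransform g) :=
    continuous_sineTransform (hg.continuous.integrable_of_hasCompactSupport hsupp)
  refine (integrable_inv_one_add_sq.const_mul (A + B)).mono'
    (hF.measurable.div measurable_id).aestronglyMeasurable (ae_of_all _ fun u => ?_)
  rcases eq_or_ne u 0 with rfl | hu
  · simp only [div_zero, norm_zero]
    exact mul_nonneg (add_nonneg (integral_nonneg fun _ => abs_nonneg _)
      (integral_nonneg fun _ => abs_nonneg _)) (by positivity)
  have hA : |sineTransform g u| ≤ |u| * A := abs_sineTransform_le_mul htg u
  have hB : |sineTransform g u| ≤ B / |u| := abs_sineTransform_le_div hg hsupp hu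
  have hu' : 0 < |u| := abs_pos.2 hu
  rw [norm_eq_abs, abs_div, ← div_eq_mul_inv, div_le_div_iff₀ hu' (by positivity)]
  rw [le_div_iff₀ hu'] at hB
  have : |u| ^ 2 = u ^ 2 := sq_abs u
  nlinarith [abs_nonneg (sineTransform g u)]

lemma integral_sineTransform_div (htg : Integrable fun t => t * g t) {R : ℝ} (hR : 0 ≤ R) :
    ∫ u in (0 : ℝ)..R, sineTransform g u / u = ∫ t, g t * sineIntegral (t * R) := by
  have hint : Integrable (Function.uncurry fun u t => t * g t * sinc (t * u))
      ((volume.restrict (Ioc 0 R)).prod volume) := by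
    refine ((integrable_const (1 : ℝ)).mul_prod htg.norm).mono' ?_ (ae_of_all _ fun p => ?_)
    · exact (htg.aestronglyMeasurable.comp_snd).mul (by fun_prop)
    · simpa [Function.uncurry, abs_mul] using
        mul_le_mul_of_nonneg_left (abs_sinc_le_one (p.2 * p.1)) (abs_nonneg (p.2 * g p.2))
  calc ∫ u in (0 : ℝ)..R, sineTransform g u / u
      = ∫ u in Ioc 0 R, ∫ t, t * g t * sinc (t * u) := by
        rw [intervalIntegral.integral_of_le hR]
        refine setIntegral_congr_fun measurableSet_Ioc fun u hu => ?_
        rw [sineTransform, ← integral_div]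
        congr 1 with t
        rw [mul_div_assoc, sin_mul_div_eq_mul_sinc t hu.1.ne']
        ring
    _ = ∫ t, g t * sineIntegral (t * R) := by
        rw [integral_integral_swap hint]
        congr 1 with t
        rw [integral_const_mul, ← intervalIntegral.integral_of_le hR, mul_comm t, mul_assoc,
          intervalIntegral.mul_integral_comp_mul_left, mul_zero, sineIntegral]

lemma tendsto_integral_mul_sineIntegral (hg : Integrable g) :
    Tendsto (fun R => ∫ t, g t * sineIntegral (t * R)) atTop
      (𝓝 (π / 2 * ∫ t, sign t * g t)) := by
  rw [← integral_const_mul]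
  refine tendsto_integral_filter_of_dominated_convergence (fun t => (π / 2 + 2) * |g t|)
    (.of_forall fun R => hg.aestronglyMeasurable.mul
      (continuous_sineIntegral.comp (by fun_prop)).aestronglyMeasurable)
    (.of_forall fun R => ae_of_all _ fun t => ?_) (hg.abs.const_mul _) (ae_of_all _ fun t => ?_)
  · rw [norm_mul, norm_eq_abs, norm_eq_abs, mul_comm]
    exact mul_le_mul_of_nonneg_right (abs_sineIntegral_le _) (abs_nonneg _)
  · simpa [mul_comm, mul_left_comm] using (tendsto_sineIntegral_mul_atTop t).const_mul (g t)

lemma integral_Ioi_sineTransform_div (hg : ContDiff ℝ 1 g) (hsupp : HasCompactSupport g) :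
    ∫ u in Ioi 0, sineTransform g u / u = π / 2 * ∫ t, sign t * g t := by
  have htg : Integrable fun t => t * g t :=
    (continuous_id.mul hg.continuous).integrable_of_hasCompactSupport hsupp.mul_left
  refine tendsto_nhds_unique (intervalIntegral_tendsto_integral_Ioi 0
    (integrable_sineTransform_div hg hsupp).integrableOn tendsto_id) ?_
  refine (tendsto_integral_mul_sineIntegral
    (hg.continuous.integrable_of_hasCompactSupport hsupp)).congr' ?_
  filter_upwards [eventually_ge_atTop 0] with R hR
  exact (integral_sineTransform_div htg hR).symm

lemma eqOn_rpow_two_smul_comp_rpow_two (f : ℝ → ℝ) :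
    EqOn (fun x => (|(2 : ℝ)| * x ^ ((2 : ℝ) - 1)) • f (x ^ (2 : ℝ)))
      (fun u => 2 * u * f (u ^ 2)) (Ioi 0) := fun x _ => by
  norm_num [rpow_two]

lemma integrableOn_Ioi_comp_sq_iff (f : ℝ → ℝ) :
    IntegrableOn (fun u => 2 * u * f (u ^ 2)) (Ioi 0) ↔ IntegrableOn f (Ioi 0) := by
  rw [← integrableOn_Ioi_comp_rpow_iff f two_ne_zero,
    integrableOn_congr_fun (eqOn_rpow_two_smul_comp_rpow_two f) measurableSet_Ioi]

lemma integral_Ioi_comp_sq (f : ℝ → ℝ) :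
    ∫ u in Ioi 0, 2 * u * f (u ^ 2) = ∫ x in Ioi 0, f x := by
  rw [← integral_comp_rpow_Ioi f two_ne_zero,
    setIntegral_congr_fun measurableSet_Ioi (eqOn_rpow_two_smul_comp_rpow_two f)]

/-- The distributional computation at the end of the proof of Theorem 4.1: for every smooth,
compactly supported `g : ℝ → ℝ`, the integral
`∫_0^∞ x^{-1/2} (∫ g(t) sin(t√x)/√x dt) dx` converges absolutely and equals
`π ∫ sgn(t) g(t) dt`. -/
theorem statement17 (g : ℝ → ℝ) (hg : ContDiff ℝ (⊤ : ℕ∞) g)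
    (hsupp : HasCompactSupport g) :
    IntegrableOn (fun x : ℝ =>
      (Real.sqrt x)⁻¹ * ∫ t : ℝ, g t * (Real.sin (t * Real.sqrt x) / Real.sqrt x))
      (Set.Ioi 0) ∧
    (∫ x in Set.Ioi (0:ℝ),
        (Real.sqrt x)⁻¹ * ∫ t : ℝ, g t * (Real.sin (t * Real.sqrt x) / Real.sqrt x))
      = Real.pi * ∫ t : ℝ, Real.sign t * g t := by
  have hg1 : ContDiff ℝ 1 g := hg.of_le (by exact_mod_cast le_top)
  set φ := fun x : ℝ => (√x)⁻¹ * ∫ t : ℝ, g t * (sin (t * √x) / √x)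
  have hφ : EqOn (fun u => 2 * u * φ (u ^ 2)) (fun u => 2 * (sineTransform g u / u)) (Ioi 0) := by
    intro u hu
    simp only [φ, sqrt_sq (le_of_lt hu), mul_div_assoc', integral_div, sineTransform]
    field_simp [(mem_Ioi.1 hu).ne']
  have hφint : IntegrableOn φ (Ioi 0) := (integrableOn_Ioi_comp_sq_iff φ).1 <|
    (((integrable_sineTransform_div hg1 hsupp).const_mul 2).integrableOn (s := Ioi 0)).congr_fun
      hφ.symm measurableSet_Ioi
  refine ⟨hφint, ?_⟩
  rw [← integral_Ioi_comp_sq, setIntegral_congr_fun measurableSet_Ioi hφ, integral_const_mul,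
    integral_Ioi_sineTransform_div hg1 hsupp]
  ring
end
end

section
/- Let g : ℝ → ℝ be continuous, nonnegative, not identically zero, with compact support contained in (1,∞). Then ∫_1^∞ e^{−√u} · |∫_ℝ g(t) sinh(t√u) dt| · u^{−1/2} du = +∞. (Equivalently, with dν(x) = χ_{(−∞,−1)}(x) e^{−|x|^{1/2}} dx, the integral ∫ |∫ g(t) sin(t√x)/√x dt| d|ν|(x) diverges, since sin(t√x)/√x = sinh(t√|x|)/√|x| for x < 0.) -/
/-!
Let `a > 1` be the left end of the support of `g` and `s = √u`. Since `sinh` is increasing,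
`∫ g(t) sinh(ts) dt ≥ sinh(as) ∫ g ≥ e^{as} ∫ g / 4`, so the integrand is at least
`(∫ g / 4) e^{(a-1)s} / s`, which tends to `+∞`; a function tending to `+∞` has infinite
integral over a half-line.
-/

open MeasureTheory Filter Set Real

lemma exp_div_four_le_sinh {x : ℝ} (hx : 1 ≤ x) : exp x / 4 ≤ sinh x := by
  have h_neg : exp (-x) ≤ 1 := exp_le_one_iff.mpr (by linarith)
  have h_two : 2 ≤ exp x := by linarith [add_one_le_exp x]
  rw [sinh_eq]
  linarith

lemma mul_integral_le_integral_mul_of_support_subset_Ici {μ : Measure ℝ} {g φ : ℝ → ℝ}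
    {a : ℝ} (hg : 0 ≤ g) (hsupp : Function.support g ⊆ Ici a) (hφ : MonotoneOn φ (Ici a))
    (hgi : Integrable g μ) (hgφ : Integrable (fun t ↦ g t * φ t) μ) :
    φ a * ∫ t, g t ∂μ ≤ ∫ t, g t * φ t ∂μ := by
  rw [← integral_const_mul]
  refine integral_mono (hgi.const_mul _) hgφ fun t ↦ ?_
  by_cases ht : g t = 0
  · simp [ht]
  · rw [mul_comm]
    exact mul_le_mul_of_nonneg_left (hφ self_mem_Ici (hsupp ht) (hsupp ht)) (hg t)

lemma integral_div_four_mul_exp_le_abs_integral_sinh {g : ℝ → ℝ} {a s : ℝ}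
    (hc : Continuous g) (hcs : HasCompactSupport g) (hnn : 0 ≤ g)
    (hsupp : Function.support g ⊆ Ici a) (ha : 1 ≤ a) (hs : 1 ≤ s) :
    (∫ t, g t) / 4 * (exp ((a - 1) * s) / s) ≤
      exp (-s) * |∫ t, g t * sinh (t * s)| * s⁻¹ := by
  have hs0 : 0 < s := by linarith
  have hsinh : sinh (a * s) * ∫ t, g t ≤ ∫ t, g t * sinh (t * s) :=
    mul_integral_le_integral_mul_of_support_subset_Ici hnn hsupp
      (fun x _ y _ hxy ↦ sinh_le_sinh.mpr (mul_le_mul_of_nonneg_right hxy hs0.le))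
      (hc.integrable_of_hasCompactSupport hcs)
      ((hc.mul (by fun_prop)).integrable_of_hasCompactSupport hcs.mul_right)
  have hexp : exp (a * s) / 4 * ∫ t, g t ≤ sinh (a * s) * ∫ t, g t :=
    mul_le_mul_of_nonneg_right (exp_div_four_le_sinh (by nlinarith))
      (integral_nonneg hnn)
  calc (∫ t, g t) / 4 * (exp ((a - 1) * s) / s)
      = exp (-s) * (exp (a * s) / 4 * ∫ t, g t) * s⁻¹ := by
        rw [show (a - 1) * s = -s + a * s by ring, exp_add]
        ring
    _ ≤ exp (-s) * |∫ t, g t * sinh (t * s)| * s⁻¹ := by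
        gcongr
        exact (hexp.trans hsinh).trans (le_abs_self _)

lemma tendsto_exp_neg_mul_abs_integral_sinh_atTop {g : ℝ → ℝ} {a : ℝ}
    (hc : Continuous g) (hcs : HasCompactSupport g) (hnn : 0 ≤ g)
    (hsupp : Function.support g ⊆ Ici a) (ha : 1 < a) (hI : 0 < ∫ t, g t) :
    Tendsto (fun s ↦ exp (-s) * |∫ t, g t * sinh (t * s)| * s⁻¹) atTop atTop := by
  have hgrowth : Tendsto (fun s ↦ (∫ t, g t) / 4 * (exp ((a - 1) * s) / s)) atTop atTop := by
    refine Tendsto.const_mul_atTop (by positivity) ?_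
    simpa using tendsto_exp_mul_div_rpow_atTop 1 (a - 1) (by linarith)
  refine tendsto_atTop_mono' _ ?_ hgrowth
  filter_upwards [eventually_ge_atTop 1] with s hs
  exact integral_div_four_mul_exp_le_abs_integral_sinh hc hcs hnn hsupp ha.le hs

lemma setLIntegral_Ioi_ofReal_eq_top_of_tendsto_atTop {f : ℝ → ℝ}
    (hf : Tendsto f atTop atTop) (b : ℝ) : ∫⁻ u in Ioi b, ENNReal.ofReal (f u) = ⊤ := by
  obtain ⟨M, hM⟩ := eventually_atTop.mp (hf.eventually_ge_atTop 1)
  have h_const : ∫⁻ _ in Ioi (max b M), (1 : ENNReal) = ⊤ := by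
    simp [Real.volume_Ioi]
  rw [eq_top_iff, ← h_const]
  calc ∫⁻ _ in Ioi (max b M), (1 : ENNReal)
      ≤ ∫⁻ u in Ioi (max b M), ENNReal.ofReal (f u) :=
        setLIntegral_mono' measurableSet_Ioi fun u hu ↦
          ENNReal.one_le_ofReal.mpr (hM u (le_of_max_le_right hu.le))
    _ ≤ ∫⁻ u in Ioi b, ENNReal.ofReal (f u) :=
        lintegral_mono_set (Ioi_subset_Ioi (le_max_left b M))

/-- The divergence at the end of Section 6: if `g : ℝ → ℝ` is continuous, nonnegative, not
identically zero, with compact support contained in `(1,∞)`, then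
`∫_1^∞ e^{-√u} |∫ g(t) sinh(t√u) dt| u^{-1/2} du = +∞`. -/
theorem statement18 (g : ℝ → ℝ) (hc : Continuous g) (hnn : ∀ t : ℝ, 0 ≤ g t)
    (hne : g ≠ 0) (hcs : HasCompactSupport g) (hsub : tsupport g ⊆ Set.Ioi 1) :
    ∫⁻ u in Set.Ioi (1:ℝ), ENNReal.ofReal
        (Real.exp (-Real.sqrt u) * |∫ t : ℝ, g t * Real.sinh (t * Real.sqrt u)| *
          (Real.sqrt u)⁻¹)
      = ⊤ := by
  obtain ⟨x, hx⟩ := Function.ne_iff.mp hne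
  obtain ⟨a, ha, ha_least⟩ := hcs.exists_isLeast ⟨x, subset_tsupport g hx⟩
  have hI : 0 < ∫ t, g t := hc.integral_pos_of_hasCompactSupport_nonneg_nonzero hcs hnn hx
  have hsupp : Function.support g ⊆ Ici a := fun t ht ↦ ha_least (subset_tsupport g ht)
  exact setLIntegral_Ioi_ofReal_eq_top_of_tendsto_atTop
    ((tendsto_exp_neg_mul_abs_integral_sinh_atTop hc hcs hnn hsupp (hsub ha) hI).comp
      Real.tendsto_sqrt_atTop) 1
end
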